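/- Let ( , )₀ be a positive definite bilinear form on ℝ[t] and B a multiple Geronimus transform (B(hf,g)=B(f,hg)=(f,g)₀, h monic of degree N) that is quasi-definite with d_n^* ≠ 0 for all n. Then B is positive definite if and only if: (−1)^N d_{n+1}^*/d_n^* > 0 for all n ≥ N; d_{n+1}^*/d_n^* > 0 for n < N even; and d_{n+1}^*/d_n^* < 0 for n < N odd. -/

import Mathlib

/-!
For a symmetric form `B` on `ℝ[X]` whose moment determinants `D n = det (B(X^i, X^j))_{i,j<n}`
are nonzero, `B` is positive definite iff every ratio `D (n+1) / D n` is positive, because this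
ratio is `B(Q n, Q n)` for the monic polynomial `Q n` of degree `n` that is `B`-orthogonal to all
polynomials of lower degree.

Monic triangular changes of basis do not change `D n`, so `D n` is also the determinant of
`B(u i, P j)`, where `u` runs through `1, X, …, X^(N-1), h P 0, …, h P (n-N-1)`. Since
`B(h P b, P c) = (P b, P c)₀` vanishes for `b ≠ c`, reversing the columns makes this matrix
block upper triangular, with diagonal blocks the matrix of `d_n^*` and the anti-diagonal matrix
of the `κ b = (P b, P b)₀ > 0`. Hence `ε n * D n = ε (n-N) * κ 0 ⋯ κ (n-N-1) * d_n^*` with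
`ε m = ±1` the sign of reversing `m` columns, and `ε (m+1) = (-1)^m ε m` turns this into
`D (n+1) / D n = (-1)^N κ (n-N) d_{n+1}^* / d_n^*` for `n ≥ N` and
`D (n+1) / D n = (-1)^n d_{n+1}^* / d_n^*` for `n < N`.
-/

open Polynomial

/-- The determinant `d_n^*`: for `n ≥ N` it is the `N × N` determinant
`det (B(P_{n-1-j}, t^q))`, and for `n < N` the analogous `n × n` determinant. -/
noncomputable def dstar (N : ℕ) (B : Polynomial ℝ →ₗ[ℝ] Polynomial ℝ →ₗ[ℝ] ℝ)
    (P : ℕ → Polynomial ℝ) (n : ℕ) : ℝ :=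
  (Matrix.of fun q j : Fin (min N n) => B (P (n - 1 - (j : ℕ))) (X ^ (q : ℕ))).det

open Equiv Matrix

theorem Fin.sign_revPerm_succ (n : ℕ) :
    Perm.sign (Fin.revPerm : Perm (Fin (n + 1))) =
      (-1) ^ n * Perm.sign (Fin.revPerm : Perm (Fin n)) := by
  have hdecomp : (Fin.revPerm : Perm (Fin (n + 1))) =
      Perm.decomposeFin.symm (0, Fin.revPerm) * finRotate (n + 1) := by
    ext x
    induction x using Fin.lastCases with
    | last => simp
    | cast y => simp [Fin.rev_castSucc]
  rw [hdecomp, map_mul, Perm.decomposeFin.symm_sign, sign_finRotate]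
  simp [mul_comm]

namespace Polynomial

variable {R : Type*} [CommRing R]

theorem linearMap_apply_eq_sum_coeff_smul {M : Type*} [AddCommGroup M] [Module R M]
    (L : R[X] →ₗ[R] M) {p : R[X]} {n : ℕ} (hp : p.natDegree < n) :
    L p = ∑ k ∈ Finset.range n, p.coeff k • L (X ^ k) := by
  conv_lhs => rw [p.as_sum_range' n hp]
  simp [map_sum, ← C_mul_X_pow_eq_monomial, ← smul_eq_C_mul]

noncomputable def gramMatrix (B : LinearMap.BilinForm R R[X]) (u v : ℕ → R[X]) (n : ℕ) :
    Matrix (Fin n) (Fin n) R :=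
  Matrix.of fun i j => B (u i) (v j)

noncomputable def momentMatrix (B : LinearMap.BilinForm R R[X]) (n : ℕ) :
    Matrix (Fin n) (Fin n) R :=
  gramMatrix B (X ^ ·) (X ^ ·) n

def coeffMatrix (u : ℕ → R[X]) (n : ℕ) : Matrix (Fin n) (Fin n) R :=
  Matrix.of fun i k => (u i).coeff k

theorem det_coeffMatrix {u : ℕ → R[X]} (hmonic : ∀ i, (u i).Monic)
    (hdeg : ∀ i, (u i).natDegree = i) (n : ℕ) : (coeffMatrix u n).det = 1 := by
  have htri : (coeffMatrix u n).IsLowerTriangular := fun i j hij =>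
    coeff_eq_zero_of_natDegree_lt (by rw [hdeg]; exact hij)
  rw [Matrix.det_of_isLowerTriangular _ htri]
  refine Finset.prod_eq_one fun i _ => ?_
  simpa [coeffMatrix, hdeg] using (hmonic i).coeff_natDegree

theorem gramMatrix_eq_mul (B : LinearMap.BilinForm R R[X]) {u v : ℕ → R[X]}
    (hu : ∀ i, (u i).natDegree = i) (hv : ∀ i, (v i).natDegree = i) (n : ℕ) :
    gramMatrix B u v n = coeffMatrix u n * momentMatrix B n * (coeffMatrix v n)ᵀ := by
  ext i j
  have hui : (u i).natDegree < n := (hu i).trans_lt i.2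
  have hvj : (v j).natDegree < n := (hv j).trans_lt j.2
  simp only [gramMatrix, momentMatrix, coeffMatrix, Matrix.mul_apply, Matrix.of_apply,
    Matrix.transpose_apply, Finset.sum_mul]
  rw [linearMap_apply_eq_sum_coeff_smul B hui, LinearMap.sum_apply, ← Fin.sum_univ_eq_sum_range,
    Finset.sum_comm]
  refine Finset.sum_congr rfl fun k _ => ?_
  rw [LinearMap.smul_apply, linearMap_apply_eq_sum_coeff_smul (B (X ^ (k : ℕ))) hvj,
    ← Fin.sum_univ_eq_sum_range, Finset.smul_sum]
  refine Finset.sum_congr rfl fun l _ => ?_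
  simp only [smul_eq_mul]
  ring

theorem det_gramMatrix (B : LinearMap.BilinForm R R[X]) {u v : ℕ → R[X]}
    (hum : ∀ i, (u i).Monic) (hu : ∀ i, (u i).natDegree = i)
    (hvm : ∀ i, (v i).Monic) (hv : ∀ i, (v i).natDegree = i) (n : ℕ) :
    (gramMatrix B u v n).det = (momentMatrix B n).det := by
  rw [gramMatrix_eq_mul B hu hv, det_mul, det_mul, det_transpose,
    det_coeffMatrix hum hu, det_coeffMatrix hvm hv, one_mul, mul_one]

theorem linearMap_apply_eq_zero_of_degree_lt {M : Type*} [AddCommGroup M] [Module R M]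
    (L : R[X] →ₗ[R] M) {n : ℕ} (hL : ∀ j < n, L (X ^ j) = 0) {p : R[X]}
    (hp : p.degree < n) :
    L p = 0 := by
  classical
  have hspan : degreeLT R n ≤ LinearMap.ker L := by
    rw [degreeLT_eq_span_X_pow, Submodule.span_le]
    intro _ hmem
    obtain ⟨j, hj, rfl⟩ := Finset.mem_image.1 hmem
    exact hL j (Finset.mem_range.1 hj)
  exact hspan (mem_degreeLT.2 hp)

theorem exists_monic_orthogonal [Nontrivial R] (B : LinearMap.BilinForm R R[X]) {n : ℕ}
    (hB : IsUnit (momentMatrix B n).det) :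
    ∃ q : R[X], q.Monic ∧ q.natDegree = n ∧ ∀ j < n, B q (X ^ j) = 0 := by
  obtain ⟨c, hc⟩ := vecMul_surjective_iff_isUnit.2 ((isUnit_iff_isUnit_det _).2 hB)
    fun j : Fin n => B (X ^ n) (X ^ (j : ℕ))
  have hlow : (∑ i : Fin n, C (c i) * X ^ (i : ℕ)).degree < (n : WithBot ℕ) :=
    degree_sum_fin_lt c
  refine ⟨X ^ n - ∑ i : Fin n, C (c i) * X ^ (i : ℕ), monic_X_pow_sub hlow,
    natDegree_eq_of_degree_eq_some ?_, fun j hj => ?_⟩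
  · rw [degree_sub_eq_left_of_degree_lt (by rwa [degree_X_pow]), degree_X_pow]
  have hcj := congrFun hc ⟨j, hj⟩
  simp only [vecMul, dotProduct, momentMatrix, gramMatrix, of_apply] at hcj
  simp only [map_sub, map_sum, LinearMap.sub_apply, LinearMap.sum_apply, ← smul_eq_C_mul,
    map_smul, LinearMap.smul_apply, smul_eq_mul, hcj, sub_self]

theorem det_momentMatrix_succ [Nontrivial R] (B : LinearMap.BilinForm R R[X]) {n : ℕ}
    {q : R[X]} (hq : q.Monic) (hdeg : q.natDegree = n) (horth : ∀ j < n, B q (X ^ j) = 0) :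
    (momentMatrix B (n + 1)).det = (momentMatrix B n).det * B q q := by
  set u : ℕ → R[X] := fun i => if i = n then q else X ^ i
  have hu : ∀ i, (u i).Monic ∧ (u i).natDegree = i := by
    intro i
    by_cases hi : i = n
    · simp [u, hi, hq, hdeg]
    · simp [u, hi]
  have hlast : ∀ j : Fin (n + 1), gramMatrix B u u (n + 1) (Fin.last n) j =
      if j = Fin.last n then B q q else 0 := by
    intro j
    induction j using Fin.lastCases with
    | last => simp [gramMatrix, u]
    | cast j => simp [gramMatrix, u, j.2.ne, horth j j.2, Fin.castSucc_ne_last]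
  rw [← det_gramMatrix B (fun i => (hu i).1) (fun i => (hu i).2) (fun i => (hu i).1)
    (fun i => (hu i).2), det_succ_row _ (Fin.last n), Finset.sum_eq_single (Fin.last n)]
  · have hminor : (gramMatrix B u u (n + 1)).submatrix (Fin.last n).succAbove
        (Fin.last n).succAbove = momentMatrix B n := by
      ext i j
      simp [gramMatrix, momentMatrix, u, i.2.ne, j.2.ne]
    rw [hminor, hlast, if_pos rfl, ← two_mul, pow_mul, neg_one_sq, one_pow, one_mul, mul_comm]
  · intro j _ hj
    rw [hlast, if_neg hj, mul_zero, zero_mul]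
  · simp

variable {K : Type*} [Field K] [LinearOrder K] [IsStrictOrderedRing K]

theorem apply_self_pos_of_monic_orthogonal (B : LinearMap.BilinForm K K[X])
    (hB : ∀ f g, B f g = B g f) {Q : ℕ → K[X]} (hQm : ∀ n, (Q n).Monic) (hQd : ∀ n, (Q n).natDegree = n)
    (hQo : ∀ n, ∀ j < n, B (Q n) (X ^ j) = 0) (hpos : ∀ n, 0 < B (Q n) (Q n))
    {q : K[X]} (hq : q ≠ 0) : 0 < B q q := by
  induction hd : q.natDegree using Nat.strong_induction_on generalizing q with
  | _ m ih =>
  set a := q.leadingCoeff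
  have ha : a ≠ 0 := leadingCoeff_ne_zero.2 hq
  set r := q - C a * Q m with hr
  have hr_deg : r.degree < m := by
    have hdeg : q.degree = (C a * Q m).degree := by
      rw [degree_C_mul ha, degree_eq_natDegree hq, degree_eq_natDegree (hQm m).ne_zero, hd, hQd]
    have hlt := degree_sub_lt_left hdeg hq (by simp [a, (hQm m).leadingCoeff])
    rwa [degree_eq_natDegree hq, hd] at hlt
  have hQr : B (Q m) r = 0 := linearMap_apply_eq_zero_of_degree_lt _ (hQo m) hr_deg
  have hexpand : B q q = a ^ 2 * B (Q m) (Q m) + B r r := by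
    have hq_eq : q = a • Q m + r := by rw [hr, smul_eq_C_mul]; abel
    rw [hq_eq]
    simp only [map_add, map_smul, LinearMap.add_apply, LinearMap.smul_apply, smul_eq_mul, hQr,
      hB r (Q m)]
    ring
  have hrr : 0 ≤ B r r := by
    rcases eq_or_ne r 0 with hr0 | hr0
    · simp [hr0]
    · refine (ih _ ?_ hr0 rfl).le
      rwa [degree_eq_natDegree hr0, Nat.cast_lt] at hr_deg
  rw [hexpand]
  have hQ_pos := hpos m
  positivity

theorem pos_iff_forall_det_momentMatrix_div_pos (B : LinearMap.BilinForm K K[X])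
    (hB : ∀ f g, B f g = B g f) (hdet : ∀ n, (momentMatrix B n).det ≠ 0) :
    (∀ q : K[X], q ≠ 0 → 0 < B q q) ↔
      ∀ n, 0 < (momentMatrix B (n + 1)).det / (momentMatrix B n).det := by
  choose Q hQm hQd hQo using fun n => exists_monic_orthogonal B (isUnit_iff_ne_zero.2 (hdet n))
  have hratio : ∀ n, (momentMatrix B (n + 1)).det / (momentMatrix B n).det = B (Q n) (Q n) :=
    fun n => by
      rw [det_momentMatrix_succ B (hQm n) (hQd n) (hQo n), mul_div_cancel_left₀ _ (hdet n)]
  simp only [hratio]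
  exact ⟨fun h n => h _ (hQm n).ne_zero,
    fun h _ => apply_self_pos_of_monic_orthogonal B hB hQm hQd hQo h⟩

noncomputable def geronimusBasis (N : ℕ) (h : R[X]) (P : ℕ → R[X]) (i : ℕ) : R[X] :=
  if i < N then X ^ i else h * P (i - N)

theorem geronimusBasis_monic_natDegree [Nontrivial R] {N : ℕ} {h : R[X]} (hm : h.Monic)
    (hd : h.natDegree = N) {P : ℕ → R[X]} (hPm : ∀ n, (P n).Monic)
    (hPd : ∀ n, (P n).natDegree = n) (i : ℕ) :
    (geronimusBasis N h P i).Monic ∧ (geronimusBasis N h P i).natDegree = i := by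
  unfold geronimusBasis
  split_ifs with hi
  · exact ⟨monic_X_pow i, natDegree_X_pow i⟩
  · refine ⟨hm.mul (hPm _), ?_⟩
    rw [hm.natDegree_mul (hPm _), hd, hPd]
    omega

theorem apply_eq_ite_of_orthogonal [Nontrivial R] (B₀ : LinearMap.BilinForm R R[X])
    (hB₀ : ∀ f g, B₀ f g = B₀ g f) {P : ℕ → R[X]} (hPm : ∀ n, (P n).Monic)
    (hPd : ∀ n, (P n).natDegree = n)
    (hPo : ∀ n : ℕ, ∀ q : R[X], q.degree < n → B₀ (P n) q = 0) (i j : ℕ) :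
    B₀ (P i) (P j) = if i = j then B₀ (P i) (P i) else 0 := by
  have hdeg : ∀ k, (P k).degree = k := fun k => by
    rw [degree_eq_natDegree (hPm k).ne_zero, hPd]
  split_ifs with hij
  · rw [hij]
  rcases Nat.lt_or_gt_of_ne hij with hlt | hlt
  · rw [hB₀]; exact hPo j _ (by rw [hdeg]; exact_mod_cast hlt)
  · exact hPo i _ (by rw [hdeg]; exact_mod_cast hlt)

end Polynomial

noncomputable def revSign (n : ℕ) : ℝ := Perm.sign (Fin.revPerm : Perm (Fin n))

theorem revSign_succ (n : ℕ) : revSign (n + 1) = (-1) ^ n * revSign n := by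
  simp [revSign, Fin.sign_revPerm_succ]

theorem revSign_mul_self (n : ℕ) : revSign n * revSign n = 1 := by
  rw [revSign, ← Int.cast_mul, ← Units.val_mul, Int.units_mul_self, Units.val_one, Int.cast_one]

theorem revSign_ne_zero (n : ℕ) : revSign n ≠ 0 :=
  left_ne_zero_of_mul_eq_one (revSign_mul_self n)

theorem eq_revSign_mul_of_revSign_mul_eq {D c : ℝ} {n : ℕ} (h : revSign n * D = c) :
    D = revSign n * c := by
  rw [← h, ← mul_assoc, revSign_mul_self, one_mul]

theorem ne_zero_of_revSign_mul_eq {N : ℕ} {D d κ : ℕ → ℝ}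
    (hrel : ∀ n, revSign n * D n = revSign (n - N) * (∏ k ∈ Finset.range (n - N), κ k) * d n)
    (hd : ∀ n, d n ≠ 0) (hκ : ∀ k, κ k ≠ 0) (n : ℕ) : D n ≠ 0 := by
  rw [eq_revSign_mul_of_revSign_mul_eq (hrel n)]
  exact mul_ne_zero (revSign_ne_zero n) (mul_ne_zero (mul_ne_zero (revSign_ne_zero _)
    (Finset.prod_ne_zero_iff.2 fun k _ => hκ k)) (hd n))

theorem div_eq_of_revSign_mul_eq_of_le {N : ℕ} {D d κ : ℕ → ℝ}
    (hrel : ∀ n, revSign n * D n = revSign (n - N) * (∏ k ∈ Finset.range (n - N), κ k) * d n)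
    (hd : ∀ n, d n ≠ 0) (hκ : ∀ k, κ k ≠ 0) {n : ℕ} (hn : N ≤ n) :
    D (n + 1) / D n = κ (n - N) * ((-1) ^ N * (d (n + 1) / d n)) := by
  have hπ : (∏ k ∈ Finset.range (n - N), κ k) ≠ 0 :=
    Finset.prod_ne_zero_iff.2 fun k _ => hκ k
  have hsign : ((-1 : ℝ) ^ n) * (-1) ^ (n - N) = (-1) ^ N := by
    rw [← pow_add, show n + (n - N) = N + 2 * (n - N) by omega, pow_add, pow_mul, neg_one_sq,
      one_pow, mul_one]
  have hεn := revSign_ne_zero n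
  have hεnN := revSign_ne_zero (n - N)
  rw [eq_revSign_mul_of_revSign_mul_eq (hrel (n + 1)), eq_revSign_mul_of_revSign_mul_eq (hrel n),
    show n + 1 - N = n - N + 1 by omega, revSign_succ, revSign_succ, Finset.prod_range_succ,
    ← hsign]
  field_simp [hd n]

theorem div_eq_of_revSign_mul_eq_of_lt {N : ℕ} {D d κ : ℕ → ℝ}
    (hrel : ∀ n, revSign n * D n = revSign (n - N) * (∏ k ∈ Finset.range (n - N), κ k) * d n)
    (hd : ∀ n, d n ≠ 0) {n : ℕ} (hn : n < N) :
    D (n + 1) / D n = (-1) ^ n * (d (n + 1) / d n) := by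
  have hεn := revSign_ne_zero n
  rw [eq_revSign_mul_of_revSign_mul_eq (hrel (n + 1)), eq_revSign_mul_of_revSign_mul_eq (hrel n),
    show n + 1 - N = 0 by omega, show n - N = 0 by omega, revSign_succ]
  field_simp [hd n, revSign_ne_zero 0]

theorem revSign_mul_det_momentMatrix {N : ℕ} {h : ℝ[X]} (hm : h.Monic) (hd : h.natDegree = N)
    {B₀ B : LinearMap.BilinForm ℝ ℝ[X]} (hB₀ : ∀ f g, B₀ f g = B₀ g f)
    (hB : ∀ f g, B f g = B g f) (hrel : ∀ f g, B (h * f) g = B₀ f g) {P : ℕ → ℝ[X]}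
    (hPm : ∀ n, (P n).Monic) (hPd : ∀ n, (P n).natDegree = n)
    (hPo : ∀ n : ℕ, ∀ q : ℝ[X], q.degree < n → B₀ (P n) q = 0)
    (n : ℕ) :
    revSign n * (momentMatrix B n).det =
      revSign (n - N) * (∏ k ∈ Finset.range (n - N), B₀ (P k) (P k)) * dstar N B P n := by
  have hu := geronimusBasis_monic_natDegree hm hd hPm hPd
  have horth := apply_eq_ite_of_orthogonal B₀ hB₀ hPm hPd hPo
  set M := (gramMatrix B (geronimusBasis N h P) P n).submatrix id Fin.revPerm
  -- for `n < N` the second block is empty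
  let e : Fin (min N n) ⊕ Fin (n - N) ≃ Fin n := finSumFinEquiv.trans (finCongr (by omega))
  have h₂₁ : (M.submatrix e e).toBlocks₂₁ = 0 := by
    ext b a
    have hb := b.2
    have ha := a.2
    simp only [M, e, gramMatrix, geronimusBasis, toBlocks₂₁, submatrix_apply, of_apply,
      trans_apply, finSumFinEquiv_apply_left, finSumFinEquiv_apply_right, finCongr_apply, id_eq,
      Fin.val_cast, Fin.val_natAdd, Fin.val_castAdd, Fin.revPerm_apply, Fin.val_rev,
      if_neg (show ¬(min N n + (b : ℕ) < N) by omega), hrel, Matrix.zero_apply]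
    rw [horth, if_neg (by omega)]
  have h₁₁ : (M.submatrix e e).toBlocks₁₁ =
      Matrix.of fun q j : Fin (min N n) => B (P (n - 1 - (j : ℕ))) (X ^ (q : ℕ)) := by
    ext a a'
    have ha := a.2
    have ha' := a'.2
    simp [M, e, gramMatrix, geronimusBasis, toBlocks₁₁, show (a : ℕ) < N by omega, hB (X ^ _),
      show n - 1 - (a' : ℕ) = n - (a' + 1) by omega]
  have h₂₂ : (M.submatrix e e).toBlocks₂₂ =
      (diagonal fun k : Fin (n - N) => B₀ (P k) (P k)).submatrix id Fin.revPerm := by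
    ext b c
    have hb := b.2
    have hc := c.2
    simp only [M, e, gramMatrix, geronimusBasis, toBlocks₂₂, submatrix_apply, of_apply,
      coe_trans, Function.comp_apply, finSumFinEquiv_apply_right, finCongr_apply, id_eq,
      Fin.val_cast, Fin.val_natAdd, Fin.revPerm_apply, Fin.val_rev, diagonal_apply, Fin.ext_iff,
      if_neg (show ¬(min N n + (b : ℕ) < N) by omega), show min N n + (b : ℕ) - N = b by omega,
      hrel]
    rw [horth, show n - (min N n + c + 1) = n - N - (c + 1) by omega]
  rw [revSign, revSign, ← det_gramMatrix B (fun i => (hu i).1) (fun i => (hu i).2) hPm hPd,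
    ← det_permute',
    ← det_submatrix_equiv_self e, ← (M.submatrix e e).fromBlocks_toBlocks, h₂₁,
    det_fromBlocks_zero₂₁, h₁₁, h₂₂, det_permute', det_diagonal,
    Fin.prod_univ_eq_prod_range (fun k => B₀ (P k) (P k))]
  rw [dstar]
  ring


theorem positive_definite_iff_sign_conditions_general (N : ℕ)
    (h : Polynomial ℝ) (hmonic : h.Monic) (hdeg : h.natDegree = N)
    (B₀ B : Polynomial ℝ →ₗ[ℝ] Polynomial ℝ →ₗ[ℝ] ℝ)
    (hsym₀ : ∀ f g, B₀ f g = B₀ g f) (hsym : ∀ f g, B f g = B g f)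
    (hpos₀ : ∀ q : Polynomial ℝ, q ≠ 0 → 0 < B₀ q q)
    (hrel : ∀ f g, B (h * f) g = B₀ f g)
    (P : ℕ → Polynomial ℝ)
    (hPmonic : ∀ n, (P n).Monic) (hPdeg : ∀ n, (P n).natDegree = n)
    (hPorth : ∀ n : ℕ, ∀ q : Polynomial ℝ, q.degree < n → B₀ (P n) q = 0)
    (hdstar : ∀ n : ℕ, dstar N B P n ≠ 0) :
    (∀ q : Polynomial ℝ, q ≠ 0 → 0 < B q q) ↔
      ((∀ n : ℕ, N ≤ n → 0 < (-1 : ℝ) ^ N * (dstar N B P (n + 1) / dstar N B P n)) ∧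
       (∀ n : ℕ, n < N → Even n → 0 < dstar N B P (n + 1) / dstar N B P n) ∧
       (∀ n : ℕ, n < N → Odd n → dstar N B P (n + 1) / dstar N B P n < 0)) := by
  have hκ : ∀ k, 0 < B₀ (P k) (P k) := fun k => hpos₀ _ (hPmonic k).ne_zero
  have hD := revSign_mul_det_momentMatrix hmonic hdeg hsym₀ hsym hrel hPmonic hPdeg hPorth
  have hle := fun n (hn : N ≤ n) =>
    div_eq_of_revSign_mul_eq_of_le hD hdstar (fun k => (hκ k).ne') hn
  have hlt := fun n (hn : n < N) => div_eq_of_revSign_mul_eq_of_lt hD hdstar hn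
  rw [pos_iff_forall_det_momentMatrix_div_pos B hsym
    (ne_zero_of_revSign_mul_eq hD hdstar fun k => (hκ k).ne')]
  constructor
  · intro hpos
    refine ⟨fun n hn => ?_, fun n hn he => ?_, fun n hn ho => ?_⟩
    · exact pos_of_mul_pos_right (hle n hn ▸ hpos n) (hκ _).le
    · simpa [hlt n hn, he.neg_one_pow] using hpos n
    · simpa [hlt n hn, ho.neg_one_pow] using hpos n
  · rintro ⟨hge, heven, hodd⟩ n
    rcases le_or_gt N n with hn | hn
    · rw [hle n hn]
      exact mul_pos (hκ _) (hge n hn)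
    · rw [hlt n hn]
      rcases n.even_or_odd with he | ho
      · simpa [he.neg_one_pow] using heven n hn he
      · simpa [ho.neg_one_pow] using hodd n hn ho

theorem positive_definite_iff_sign_conditions (N : ℕ) (hN : 1 ≤ N)
    (h : Polynomial ℝ) (hmonic : h.Monic) (hdeg : h.natDegree = N)
    (B₀ B : Polynomial ℝ →ₗ[ℝ] Polynomial ℝ →ₗ[ℝ] ℝ)
    (hsym₀ : ∀ f g, B₀ f g = B₀ g f) (hsym : ∀ f g, B f g = B g f)
    (hpos₀ : ∀ q : Polynomial ℝ, q ≠ 0 → 0 < B₀ q q)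
    (hrel : ∀ f g, B (h * f) g = B₀ f g) (hrel' : ∀ f g, B f (h * g) = B₀ f g)
    (P : ℕ → Polynomial ℝ)
    (hPmonic : ∀ n, (P n).Monic) (hPdeg : ∀ n, (P n).natDegree = n)
    (hPorth : ∀ n : ℕ, ∀ q : Polynomial ℝ, q.degree < n → B₀ (P n) q = 0)
    (hdstar : ∀ n : ℕ, dstar N B P n ≠ 0) :
    (∀ q : Polynomial ℝ, q ≠ 0 → 0 < B q q) ↔
      ((∀ n : ℕ, N ≤ n → 0 < (-1 : ℝ) ^ N * (dstar N B P (n + 1) / dstar N B P n)) ∧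
       (∀ n : ℕ, n < N → Even n → 0 < dstar N B P (n + 1) / dstar N B P n) ∧
       (∀ n : ℕ, n < N → Odd n → dstar N B P (n + 1) / dstar N B P n < 0)) :=
  positive_definite_iff_sign_conditions_general N h hmonic hdeg B₀ B hsym₀ hsym hpos₀ hrel P hPmonic
    hPdeg hPorth hdstar
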